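/- arXiv:1004.0500 — 4 statements merged into one kernel-verified Lean document; each statement's English description precedes it below -/
import Mathlib

section
/- Let K be a perfect field and let A, B ∈ GL(3,K) be conjugate matrices such that A has no eigenvalue in K. Then A⁻¹B is not equal to the 3×3 matrix with 1's on the diagonal, a 1 in position (2,1), and 0 elsewhere (i.e., the unipotent matrix with a single Jordan block of size 2 and one of size 1). -/
/-!
Write `U` for the unipotent matrix, a transvection. If `A⁻¹ B = U` then `B = A U`, and since `B`
is conjugate to `A`, the invariants `tr` and `tr ∘ adj` (the two middle coefficients of the
characteristic polynomial) agree on `A` and `A U`. Comparing them forces `A₀₁ = 0` and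
`A₀₂ A₂₁ = 0`. Then either row `0` or column `1` of `A` vanishes off the diagonal, so a diagonal
entry of `A` is an eigenvalue in `K`.
-/

theorem IsConj.exists_eq_units_conj {M : Type*} [Monoid M] {a b : M} (h : IsConj a b) :
    ∃ c : Mˣ, b = c * a * c⁻¹ := by
  obtain ⟨c, hc⟩ := h
  exact ⟨c, (Units.eq_mul_inv_iff_mul_eq c).mpr hc.eq.symm⟩

namespace Matrix

variable {n R : Type*} [Fintype n] [DecidableEq n] [CommRing R]

theorem trace_adjugate_units_conj (P : (Matrix n n R)ˣ) (A : Matrix n n R) :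
    trace (adjugate (P * A * P⁻¹ : Matrix n n R)) = trace (adjugate A) := by
  rw [adjugate_mul_distrib, adjugate_mul_distrib, trace_mul_comm, mul_assoc,
    ← adjugate_mul_distrib, ← Units.val_mul, inv_mul_cancel, Units.val_one, adjugate_one,
    mul_one]

theorem trace_eq_of_isConj {A B : Matrix n n R} (h : IsConj A B) : trace A = trace B := by
  obtain ⟨P, rfl⟩ := h.exists_eq_units_conj
  exact (trace_units_conj P A).symm

theorem trace_adjugate_eq_of_isConj {A B : Matrix n n R} (h : IsConj A B) :
    trace (adjugate A) = trace (adjugate B) := by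
  obtain ⟨P, rfl⟩ := h.exists_eq_units_conj
  exact (trace_adjugate_units_conj P A).symm

theorem trace_mul_transvection (A : Matrix n n R) (i j : n) (c : R) :
    trace (A * transvection i j c) = trace A + c * A j i := by
  rw [transvection, Matrix.mul_add, mul_one, trace_add, trace_mul_single,
    MulOpposite.smul_eq_mul_unop, MulOpposite.unop_op, mul_comm]

theorem adjugate_transvection {i j : n} (hij : i ≠ j) (c : R) :
    adjugate (transvection i j c) = transvection i j (-c) := by
  calc adjugate (transvection i j c)
      = adjugate (transvection i j c) * (transvection i j c * transvection i j (-c)) := by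
        rw [transvection_mul_transvection_same _ _ hij, add_neg_cancel, transvection_zero,
          mul_one]
    _ = transvection i j (-c) := by
        rw [← mul_assoc, adjugate_mul, det_transvection_of_ne _ _ hij, one_smul, one_mul]

theorem trace_adjugate_mul_transvection (A : Matrix n n R) {i j : n} (hij : i ≠ j) (c : R) :
    trace (adjugate (A * transvection i j c)) = trace (adjugate A) - c * adjugate A j i := by
  rw [adjugate_mul_distrib, adjugate_transvection hij, trace_mul_comm, trace_mul_transvection,
    neg_mul, sub_eq_add_neg]

theorem det_sub_diag_smul_one_eq_zero_of_row (A : Matrix n n R) (i : n)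
    (h : ∀ j, j ≠ i → A i j = 0) : det (A - A i i • 1) = 0 := by
  refine det_eq_zero_of_row_eq_zero i fun j => ?_
  by_cases hj : j = i
  · simp [hj]
  · simp [h j hj, Ne.symm hj]

theorem det_sub_diag_smul_one_eq_zero_of_col (A : Matrix n n R) (j : n)
    (h : ∀ i, i ≠ j → A i j = 0) : det (A - A j j • 1) = 0 := by
  refine det_eq_zero_of_column_eq_zero j fun i => ?_
  by_cases hi : i = j
  · simp [hi]
  · simp [h i hi, hi]

end Matrix

open Matrix

theorem inv_mul_ne_unipotent_general {K : Type*} [Field K]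
    (A B : (Matrix (Fin 3) (Fin 3) K)ˣ)
    (hconj : IsConj A B)
    (hev : ∀ lam : K,
      ((A : Matrix (Fin 3) (Fin 3) K) - lam • (1 : Matrix (Fin 3) (Fin 3) K)).det ≠ 0) :
    ((A⁻¹ * B : (Matrix (Fin 3) (Fin 3) K)ˣ) : Matrix (Fin 3) (Fin 3) K) ≠
      !![(1 : K), 0, 0; 1, 1, 0; 0, 0, 1] := by
  intro hU
  set a : Matrix (Fin 3) (Fin 3) K := ↑A
  have hB : (B : Matrix (Fin 3) (Fin 3) K) = a * transvection 1 0 1 := by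
    have hT : !![(1 : K), 0, 0; 1, 1, 0; 0, 0, 1] = transvection 1 0 1 := by
      ext i j; fin_cases i <;> fin_cases j <;> simp [transvection]
    rw [← hT, ← hU, ← Units.val_mul, mul_inv_cancel_left]
  have hconj' : IsConj a (a * transvection 1 0 1) := hB ▸ (Units.coeHom _).map_isConj hconj
  have h01 : a 0 1 = 0 := by
    simpa [trace_mul_transvection] using trace_eq_of_isConj hconj'
  have hadj01 : adjugate a 0 1 = 0 := by
    simpa using sub_eq_self.mp ((trace_adjugate_eq_of_isConj hconj').trans
      (trace_adjugate_mul_transvection a (by decide) 1)).symm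
  have h0221 : a 0 2 * a 2 1 = 0 := by
    simpa [adjugate_fin_three, h01] using hadj01
  rcases mul_eq_zero.mp h0221 with h02 | h21
  · exact hev (a 0 0) (det_sub_diag_smul_one_eq_zero_of_row a 0 fun j hj => by
      fin_cases j <;> simp_all)
  · exact hev (a 1 1) (det_sub_diag_smul_one_eq_zero_of_col a 1 fun i hi => by
      fin_cases i <;> simp_all)

/-- **Proposition 1.1.** Over a perfect field `K`, if `A ∼ B` in `GL(3,K)` and `A` has no
eigenvalue in `K`, then `A⁻¹ B` is not the unipotent matrix with Jordan blocks of sizes 2, 1. -/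
theorem inv_mul_ne_unipotent {K : Type*} [Field K] [PerfectField K]
    (A B : (Matrix (Fin 3) (Fin 3) K)ˣ)
    (hconj : IsConj A B)
    (hev : ∀ lam : K,
      ((A : Matrix (Fin 3) (Fin 3) K) - lam • (1 : Matrix (Fin 3) (Fin 3) K)).det ≠ 0) :
    ((A⁻¹ * B : (Matrix (Fin 3) (Fin 3) K)ˣ) : Matrix (Fin 3) (Fin 3) K) ≠
      !![(1 : K), 0, 0; 1, 1, 0; 0, 0, 1] :=
  inv_mul_ne_unipotent_general A B hconj hev
end

section
/- Let q be a prime power with q ≡ 2 mod 3 (so 3 divides q+1). In SU(3,q²), the conjugacy class of a regular unipotent element (Jordan form a single Jordan block with eigenvalue ω^k, where ω^{q+1} in the center) under taking inverses: if A lies in the class C₃^{(k,l)} represented over 𝔽_{q²} by the lower triangular matrix with diagonal entries ω^k, entry ρ^l in position (2,1), and 1 in position (3,2), then A⁻¹ lies in C₃^{(−k,l)}, and ω^{k'}·A lies in C₃^{(k+k',l)}. -/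
/-- Conjugacy in `SL(3, 𝔽_{q²})`: `Y = P X P⁻¹` for some `P` of determinant 1. -/
def SL3Conj {F : Type*} [Field F] (X Y : Matrix (Fin 3) (Fin 3) F) : Prop :=
  ∃ P : Matrix (Fin 3) (Fin 3) F, P.det = 1 ∧ Y = P * X * P⁻¹

/-- The representative of the class `C₃^{(k,l)}` of `SU(3,q²)`: lower triangular with diagonal
entries `ω^k`, entry `ρ^l` in position `(2,1)` and `1` in position `(3,2)`. -/
def C3rep {F : Type*} [Field F] (ρ ω : Fˣ) (k l : ℤ) : Matrix (Fin 3) (Fin 3) F :=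
  !![((ω ^ k : Fˣ) : F), 0, 0;
     ((ρ ^ l : Fˣ) : F), ((ω ^ k : Fˣ) : F), 0;
     0, 1, ((ω ^ k : Fˣ) : F)]

lemma C3rep_key1 {F : Type*} [Field F] (ρ ω : Fˣ) (k l : ℤ) :
    ∃ Q : Matrix (Fin 3) (Fin 3) F, Q.det = 1 ∧
      C3rep ρ ω k l * Q * C3rep ρ ω (-k) l = Q := by
  have hu : (↑ω:F) ≠ 0 := ω.ne_zero
  refine ⟨!![-((ω ^ (2*k) : Fˣ) : F), 0, 0; 0, 1, 0;
      0, -((ω ^ (-k) : Fˣ) : F), -((ω ^ (-(2*k)) : Fˣ) : F)], ?_, ?_⟩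
  · simp [Matrix.det_fin_three]
    simp only [← zpow_neg, ← zpow_add₀ hu]
    norm_num
  · ext i j
    fin_cases i <;> fin_cases j <;>
      simp [C3rep, Matrix.mul_apply, Fin.sum_univ_succ, Matrix.vecHead, Matrix.vecTail] <;>
      simp only [inv_pow, ← zpow_neg, ← zpow_natCast, ← zpow_mul, mul_assoc,
        ← zpow_add₀ hu] <;> ring_nf
    all_goals simp

lemma C3rep_key2 {F : Type*} [Field F] (ρ ω : Fˣ) (k l k' : ℤ) :
    ∃ D : Matrix (Fin 3) (Fin 3) F, D.det = 1 ∧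
      (((ω ^ k' : Fˣ) : F) • C3rep ρ ω k l) * D = D * C3rep ρ ω (k + k') l := by
  have hu : (↑ω:F) ≠ 0 := ω.ne_zero
  refine ⟨!![((ω ^ (-k') : Fˣ) : F), 0, 0; 0, 1, 0; 0, 0, ((ω ^ k' : Fˣ) : F)], ?_, ?_⟩
  · simp [Matrix.det_fin_three]
    simp only [← zpow_neg, ← zpow_add₀ hu]
    norm_num
  · ext i j
    fin_cases i <;> fin_cases j <;>
      simp [C3rep, Matrix.mul_apply, Fin.sum_univ_succ, Matrix.vecHead, Matrix.vecTail] <;>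
      simp only [inv_pow, ← zpow_neg, ← zpow_natCast, ← zpow_mul, mul_assoc,
        ← zpow_add₀ hu] <;> ring_nf
    all_goals simp
    all_goals (rw [mul_comm ((↑ω:F) ^ k'), mul_assoc]; simp [← zpow_neg, ← zpow_add₀ hu])

lemma C3rep_det_isUnit {F : Type*} [Field F] (ρ ω : Fˣ) (k l : ℤ) :
    IsUnit (C3rep ρ ω k l).det := by
  have hu : (↑ω:F) ≠ 0 := ω.ne_zero
  have h : (C3rep ρ ω k l).det = ((ω ^ (3*k) : Fˣ) : F) := by
    simp [C3rep, Matrix.det_fin_three]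
    simp only [← zpow_add₀ hu]
    ring_nf
  rw [h]; exact (ω ^ (3*k)).isUnit

/-- **Proposition 1.2** (for `SU(3,q²)`, `3 ∣ q+1`). If `A ∈ C₃^{(k,l)}`, then
`A⁻¹ ∈ C₃^{(−k,l)}` and `ω^{k'}·A ∈ C₃^{(k+k',l)}`. -/
theorem C3_class_inv_and_scalar_mul {q : ℕ} (hq : ∃ p n : ℕ, p.Prime ∧ 0 < n ∧ q = p ^ n)
    (hq3 : q % 3 = 2)
    {F : Type*} [Field F] [Fintype F] (hF : Fintype.card F = q ^ 2)
    (ρ : Fˣ) (hρ : ∀ x : Fˣ, x ∈ Subgroup.zpowers ρ)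
    (ω : Fˣ) (hω : ω = ρ ^ (q - 1))
    (k l k' : ℤ) (A : Matrix (Fin 3) (Fin 3) F)
    (hAdet : A.det = 1)
    (hAunitary : A.transpose.map (fun z => z ^ q) * A = 1)
    (hAclass : SL3Conj (C3rep ρ ω k l) A) :
    SL3Conj (C3rep ρ ω (-k) l) A⁻¹ ∧
      SL3Conj (C3rep ρ ω (k + k') l) (((ω ^ k' : Fˣ) : F) • A) := by
  obtain ⟨P, hPdet, hA⟩ := hAclass
  set X := C3rep ρ ω k l with hX
  have hPunit : IsUnit P.det := hPdet ▸ isUnit_one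
  have hXunit : IsUnit X.det := C3rep_det_isUnit ρ ω k l
  constructor
  · obtain ⟨Q, hQdet, hQeq⟩ := C3rep_key1 (F := F) ρ ω k l
    have hQunit : IsUnit Q.det := hQdet ▸ isUnit_one
    set M := C3rep ρ ω (-k) l with hM
    have hXinv : X⁻¹ = Q * M * Q⁻¹ := by
      apply Matrix.inv_eq_right_inv
      calc X * (Q * M * Q⁻¹) = (X * Q * M) * Q⁻¹ := by noncomm_ring
        _ = Q * Q⁻¹ := by rw [hQeq]
        _ = 1 := Matrix.mul_nonsing_inv Q hQunit
    have hAinv : A⁻¹ = P * X⁻¹ * P⁻¹ := by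
      apply Matrix.inv_eq_right_inv
      rw [hA]
      calc P * X * P⁻¹ * (P * X⁻¹ * P⁻¹) = P * X * (P⁻¹ * P) * X⁻¹ * P⁻¹ := by noncomm_ring
        _ = P * (X * X⁻¹) * P⁻¹ := by rw [Matrix.nonsing_inv_mul P hPunit]; noncomm_ring
        _ = P * P⁻¹ := by rw [Matrix.mul_nonsing_inv X hXunit]; noncomm_ring
        _ = 1 := Matrix.mul_nonsing_inv P hPunit
    refine ⟨P * Q, by simp [Matrix.det_mul, hPdet, hQdet], ?_⟩
    rw [hAinv, hXinv, Matrix.mul_inv_rev]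
    noncomm_ring
  · obtain ⟨D, hDdet, hDeq⟩ := C3rep_key2 (F := F) ρ ω k l k'
    have hDunit : IsUnit D.det := hDdet ▸ isUnit_one
    set C := C3rep ρ ω (k + k') l with hC
    have hsX : ((ω ^ k' : Fˣ) : F) • X = D * C * D⁻¹ := by
      calc ((ω ^ k' : Fˣ) : F) • X
          = (((ω ^ k' : Fˣ) : F) • X) * (D * D⁻¹) := by
            rw [Matrix.mul_nonsing_inv D hDunit, mul_one]
        _ = ((((ω ^ k' : Fˣ) : F) • X) * D) * D⁻¹ := by rw [mul_assoc]
        _ = D * C * D⁻¹ := by rw [hDeq]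
    refine ⟨P * D, by simp [Matrix.det_mul, hPdet, hDdet], ?_⟩
    rw [hA]
    calc ((ω ^ k' : Fˣ) : F) • (P * X * P⁻¹)
        = P * (((ω ^ k' : Fˣ) : F) • X) * P⁻¹ := by
          rw [Matrix.mul_smul, Matrix.smul_mul]
      _ = P * (D * C * D⁻¹) * P⁻¹ := by rw [hsX]
      _ = P * D * C * (P * D)⁻¹ := by rw [Matrix.mul_inv_rev]; noncomm_ring
end

section
/- Let K be a field and let A, B ∈ SL(3,K) be lower unitriangular matrices A = (1,0,0; a₂₁,1,0; a₃₁,a₃₂,1) and B = (1,0,0; b₂₁,1,0; b₃₁,b₃₂,1) with a₂₁a₃₂b₂₁b₃₂ ≠ 0. Then A and B are conjugate in SL(3,K) if and only if (a₂₁²a₃₂)/(b₂₁²b₃₂) is a cube in K. -/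
/-!
Write `L(a₂₁, a₃₁, a₃₂)` for the lower unitriangular matrix. When `a₂₁ a₃₂ ≠ 0`, an explicit
lower-triangular matrix `C` with determinant `b₂₁² b₃₂ / (a₂₁² a₃₂)` satisfies
`C L(a) = L(b) C`, and every matrix commuting with `L(a)` is lower triangular with constant
diagonal, so its determinant is a cube. If `P L(a) P⁻¹ = L(b)` with `det P = 1`, then the
conjugator `C` from `L(b)` to `L(a)` gives `C P` commuting with `L(a)`, whence
`det C = a₂₁² a₃₂ / (b₂₁² b₃₂)` is a cube. Conversely, if that ratio is `c³`, then `c • C`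
conjugates `L(a)` to `L(b)` and has determinant one.
-/

theorem Matrix.conj_eq_iff_mul_eq {n R : Type*} [Fintype n] [DecidableEq n] [CommRing R]
    {P A B : Matrix n n R} (hP : IsUnit P.det) : P * A * P⁻¹ = B ↔ P * A = B * P :=
  ⟨fun h => by rw [← h, Matrix.nonsing_inv_mul_cancel_right P (P * A) hP],
    fun h => by rw [h, Matrix.mul_nonsing_inv_cancel_right P B hP]⟩

section LowerUnitriangular

variable {K : Type*} [Field K]

def lowerUnitriangular (a21 a31 a32 : K) : Matrix (Fin 3) (Fin 3) K :=
  !![1, 0, 0; a21, 1, 0; a31, a32, 1]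

def conjugator (a21 a31 a32 b21 b31 b32 : K) : Matrix (Fin 3) (Fin 3) K :=
  !![1, 0, 0;
    0, b21 / a21, 0;
    0, (b31 * a21 * a32 - b21 * b32 * a31) / (a21 ^ 2 * a32), b21 * b32 / (a21 * a32)]

theorem conjugator_mul_lowerUnitriangular {a21 a31 a32 b21 b31 b32 : K} (ha21 : a21 ≠ 0) (ha32 : a32 ≠ 0) :
    conjugator a21 a31 a32 b21 b31 b32 * lowerUnitriangular a21 a31 a32 =
      lowerUnitriangular b21 b31 b32 * conjugator a21 a31 a32 b21 b31 b32 := by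
  ext i j
  fin_cases i <;> fin_cases j <;>
    simp [conjugator, lowerUnitriangular, Matrix.mul_apply, Fin.sum_univ_three] <;>
    field_simp <;> ring

theorem det_conjugator (a21 a31 a32 b21 b31 b32 : K) :
    (conjugator a21 a31 a32 b21 b31 b32).det = b21 ^ 2 * b32 / (a21 ^ 2 * a32) := by
  simp [conjugator, Matrix.det_fin_three]
  ring

theorem det_eq_pow_three_of_commute_lowerUnitriangular {a21 a31 a32 : K}
    {Q : Matrix (Fin 3) (Fin 3) K} (ha21 : a21 ≠ 0) (ha32 : a32 ≠ 0)
    (hQ : Commute Q (lowerUnitriangular a21 a31 a32)) :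
    Q.det = Q 0 0 ^ 3 := by
  have e00 := congrFun₂ hQ.eq 0 0
  have e01 := congrFun₂ hQ.eq 0 1
  have e10 := congrFun₂ hQ.eq 1 0
  have e11 := congrFun₂ hQ.eq 1 1
  have e21 := congrFun₂ hQ.eq 2 1
  simp only [lowerUnitriangular, Matrix.mul_apply, Matrix.of_apply, Matrix.cons_val',
    Matrix.cons_val_zero, Matrix.cons_val_fin_one, Fin.sum_univ_three, mul_one,
    Matrix.cons_val_one, Matrix.cons_val, one_mul, zero_mul, add_zero, mul_zero, zero_add,
    add_eq_left, mul_eq_zero] at e00 e01 e10 e11 e21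
  have q02 : Q 0 2 = 0 := e01.resolve_right ha32
  have q01 : Q 0 1 = 0 :=
    mul_right_cancel₀ ha21 (by linear_combination e00 - a31 * q02)
  have q12 : Q 1 2 = 0 :=
    mul_right_cancel₀ ha32 (by linear_combination e11 + a21 * q01)
  have q11 : Q 1 1 = Q 0 0 :=
    mul_right_cancel₀ ha21 (by linear_combination e10 - a31 * q12)
  have q22 : Q 2 2 = Q 0 0 :=
    mul_right_cancel₀ ha32 (by linear_combination e21 + a31 * q01 + a32 * q11)
  rw [Matrix.det_fin_three, q01, q02, q12, q11, q22]
  ring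

end LowerUnitriangular

/-- Two lower unitriangular matrices `A = (1,0,0; a₂₁,1,0; a₃₁,a₃₂,1)` and
`B = (1,0,0; b₂₁,1,0; b₃₁,b₃₂,1)` with `a₂₁ a₃₂ b₂₁ b₃₂ ≠ 0` are conjugate in `SL(3,K)`
if and only if `(a₂₁² a₃₂)/(b₂₁² b₃₂)` is a cube in `K`. -/
theorem unitriangular_conj_iff_cube {K : Type*} [Field K]
    (a21 a31 a32 b21 b31 b32 : K) (h : a21 * a32 * b21 * b32 ≠ 0) :
    (∃ P : Matrix (Fin 3) (Fin 3) K, P.det = 1 ∧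
        P * !![(1 : K), 0, 0; a21, 1, 0; a31, a32, 1] * P⁻¹ =
          !![(1 : K), 0, 0; b21, 1, 0; b31, b32, 1]) ↔
      ∃ c : K, c ^ 3 = (a21 ^ 2 * a32) / (b21 ^ 2 * b32) := by
  obtain ⟨⟨⟨ha21, ha32⟩, hb21⟩, hb32⟩ := by simpa only [mul_ne_zero_iff] using h
  change (∃ P, P.det = 1 ∧ P * lowerUnitriangular a21 a31 a32 * P⁻¹ =
    lowerUnitriangular b21 b31 b32) ↔ _
  constructor
  · rintro ⟨P, hPdet, hconj⟩
    have hPA := (Matrix.conj_eq_iff_mul_eq (by simp [hPdet])).1 hconj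
    set C := conjugator b21 b31 b32 a21 a31 a32
    have hCP : Commute (C * P) (lowerUnitriangular a21 a31 a32) := by
      rw [Commute, SemiconjBy, mul_assoc, hPA, ← mul_assoc,
        conjugator_mul_lowerUnitriangular hb21 hb32, mul_assoc]
    refine ⟨(C * P) 0 0, ?_⟩
    rw [← det_eq_pow_three_of_commute_lowerUnitriangular ha21 ha32 hCP, Matrix.det_mul, hPdet,
      mul_one, det_conjugator]
  · rintro ⟨c, hc⟩
    set C := conjugator a21 a31 a32 b21 b31 b32
    have hdet : (c • C).det = 1 := by
      rw [Matrix.det_smul, Fintype.card_fin, det_conjugator, hc]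
      field_simp
    refine ⟨c • C, hdet, (Matrix.conj_eq_iff_mul_eq (by simp [hdet])).2 ?_⟩
    rw [Matrix.smul_mul, Matrix.mul_smul, conjugator_mul_lowerUnitriangular ha21 ha32]
end

section
/- In the group F = Q₈ ⋊ ℤ₃ (where the generator a of ℤ₃ cyclically permutes i, j, k via ia = aj, ja = ak, ka = ai), the product of the conjugacy class of a with the conjugacy class of a² (i.e., {a,ia,ja,ka}·{a²,−ia²,−ja²,−ka²}) equals {1} ∪ {±i,±j,±k}. -/
open Pointwise

/-- In `F = Q₈ ⋊ ℤ₃`, the product of the conjugacy class of `a` with the conjugacy class of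
`a²` equals `{1} ∪ {±i, ±j, ±k}`. -/
theorem class_a_mul_class_a_sq {Γ : Type*} [Group Γ]
    (i j a n : Γ)
    (hcard : Nat.card Γ = 24)
    (hgen : Subgroup.closure {i, j, a} = ⊤)
    (hi : i * i = n) (hj : j * j = n) (hk : (i * j) * (i * j) = n)
    (hn : n * n = 1) (hn1 : n ≠ 1)
    (ha : a ^ 3 = 1) (ha1 : a ≠ 1)
    (hia : i * a = a * j) (hja : j * a = a * (i * j)) (hka : (i * j) * a = a * i) :
    ({a, i * a, j * a, (i * j) * a} : Set Γ) *
        ({a ^ 2, n * (i * a ^ 2), n * (j * a ^ 2), n * ((i * j) * a ^ 2)} : Set Γ) =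
      insert (1 : Γ) {i, n * i, j, n * j, i * j, n * (i * j)} := by
  have L : ∀ {x y u v : Γ}, x * y = u * v → ∀ t : Γ, x * (y * t) = u * (v * t) := by
    intro x y u v h t; rw [← mul_assoc, h, mul_assoc]
  have L1 : ∀ {x y z : Γ}, x * y = z → ∀ t : Γ, x * (y * t) = z * t := by
    intro x y z h t; rw [← mul_assoc, h]
  have hni : i * n = n * i := by rw [← hi, mul_assoc]
  have hnj : j * n = n * j := by rw [← hj, mul_assoc]
  have hna : a * n = n * a := by
    calc a * n = a * ((i*j)*(i*j)) := by rw [hk]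
      _ = (a*(i*j))*(i*j) := (mul_assoc a (i*j) (i*j)).symm
      _ = (j*a)*(i*j) := by rw [hja]
      _ = j*(a*(i*j)) := mul_assoc j a (i*j)
      _ = j*(j*a) := by rw [hja]
      _ = (j*j)*a := (mul_assoc j j a).symm
      _ = n*a := by rw [hj]
  have han : n * a = a * n := hna.symm
  have hji : j * i = n * (i * j) := by
    have e1 : i * ((j * i) * j) = n := by
      rw [mul_assoc j i, ← mul_assoc i j (i*j), hk]
    have e2 : i * ((n * (i * j)) * j) = n := by
      rw [mul_assoc n, mul_assoc i j, hj, hni, ← mul_assoc n n, hn, one_mul, hi]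
    exact mul_right_cancel (mul_left_cancel (e1.trans e2.symm))
  have ha3' : (a * a) * a = 1 := by rw [← ha, pow_succ, pow_two]
  have ha3 : a * (a * a) = 1 := by rw [← mul_assoc]; exact ha3'
  have ra3 : ∀ t : Γ, a * (a * (a * t)) = t := by
    intro t; rw [← mul_assoc, ← mul_assoc, ha3', one_mul]
  have r_ia := L hia
  have r_ja := L hja
  have r_ka := L hka
  have r_ii := L1 hi
  have r_jj := L1 hj
  have r_nn := L1 hn
  have r_ji := L hji
  have r_in := L hni
  have r_jn := L hnj
  have r_na := L han
  ext x
  simp only [Set.mem_mul, Set.mem_insert_iff, Set.mem_singleton_iff]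
  constructor
  · rintro ⟨p, hp, q, hq, rfl⟩
    rcases hp with rfl | rfl | rfl | rfl <;> rcases hq with rfl | rfl | rfl | rfl <;>
      simp [mul_assoc, pow_two, one_mul, mul_one, hia, r_ia, hja, r_ja, hka, r_ka,
        hi, r_ii, hj, r_jj, hn, r_nn, hji, r_ji, hni, r_in, hnj, r_jn, han, r_na,
        ha3, ra3]
  · rintro (hx | hx | hx | hx | hx | hx | hx)
    · exact ⟨a, by simp, a ^ 2, by simp, by
        rw [hx]; simp [mul_assoc, pow_two, ha3, ra3]⟩
    · exact ⟨(i*j)*a, by simp, n*((i*j)*a^2), by simp, by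
        rw [hx]; simp [mul_assoc, pow_two, hia, r_ia, hja, r_ja, hka, r_ka, hi, r_ii,
          hj, r_jj, hn, r_nn, hji, r_ji, hni, r_in, hnj, r_jn, han, r_na, ha3, ra3]⟩
    · exact ⟨j*a, by simp, n*(i*a^2), by simp, by
        rw [hx]; simp [mul_assoc, pow_two, hia, r_ia, hja, r_ja, hka, r_ka, hi, r_ii,
          hj, r_jj, hn, r_nn, hji, r_ji, hni, r_in, hnj, r_jn, han, r_na, ha3, ra3]⟩
    · exact ⟨i*a, by simp, n*(i*a^2), by simp, by
        rw [hx]; simp [mul_assoc, pow_two, hia, r_ia, hja, r_ja, hka, r_ka, hi, r_ii,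
          hj, r_jj, hn, r_nn, hji, r_ji, hni, r_in, hnj, r_jn, han, r_na, ha3, ra3]⟩
    · exact ⟨(i*j)*a, by simp, n*(j*a^2), by simp, by
        rw [hx]; simp [mul_assoc, pow_two, hia, r_ia, hja, r_ja, hka, r_ka, hi, r_ii,
          hj, r_jj, hn, r_nn, hji, r_ji, hni, r_in, hnj, r_jn, han, r_na, ha3, ra3]⟩
    · exact ⟨j*a, by simp, n*(j*a^2), by simp, by
        rw [hx]; simp [mul_assoc, pow_two, hia, r_ia, hja, r_ja, hka, r_ka, hi, r_ii,
          hj, r_jj, hn, r_nn, hji, r_ji, hni, r_in, hnj, r_jn, han, r_na, ha3, ra3]⟩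
    · exact ⟨a, by simp, n*(i*a^2), by simp, by
        rw [hx]; simp [mul_assoc, pow_two, hia, r_ia, hja, r_ja, hka, r_ka, hi, r_ii,
          hj, r_jj, hn, r_nn, hji, r_ji, hni, r_in, hnj, r_jn, han, r_na, ha3, ra3]⟩
end
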